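/- Hankel rank principle: Let β = (β_0,...,β_{2k}) ∈ ℝ^{2k+1} with Hankel matrix A_β positive semidefinite, let β̃ = (β_0,...,β_{2k-2}) and r = rank β̃. Then rank A_{β̃} = r and r ≤ rank A_β ≤ r + 1. -/
import Mathlib


open Matrix Module

/-- The (k+1)×(k+1) Hankel matrix of a sequence β = (β₀,...,β₂ₖ). -/
def hankel {k : ℕ} (β : Fin (2*k+1) → ℝ) : Matrix (Fin (k+1)) (Fin (k+1)) ℝ :=
  fun i j => β ⟨i.1 + j.1, by have := i.2; have := j.2; omega⟩

/-- The leading principal (j+1)×(j+1) submatrix A(j) of a (k+1)×(k+1) matrix, j ≤ k. -/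
def leadSub {k : ℕ} (A : Matrix (Fin (k+1)) (Fin (k+1)) ℝ) (j : ℕ) (h : j ≤ k) :
    Matrix (Fin (j+1)) (Fin (j+1)) ℝ :=
  A.submatrix (Fin.castLE (by omega)) (Fin.castLE (by omega))

/-- The leading principal r×r submatrix of a (k+1)×(k+1) matrix, r ≤ k+1. -/
def leadSq {k : ℕ} (A : Matrix (Fin (k+1)) (Fin (k+1)) ℝ) (r : ℕ) (h : r ≤ k+1) :
    Matrix (Fin r) (Fin r) ℝ :=
  A.submatrix (Fin.castLE h) (Fin.castLE h)

/-- The rank of a sequence via its Hankel matrix: k+1 if the matrix is nonsingular, and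
otherwise the least index i whose column lies in the span of the preceding columns. -/
noncomputable def hankelRank {k : ℕ} (A : Matrix (Fin (k+1)) (Fin (k+1)) ℝ) : ℕ :=
  if A.det ≠ 0 then k+1
  else sInf {i : ℕ | ∃ h : i < k+1,
    (fun r => A r ⟨i, h⟩) ∈ Submodule.span ℝ
      {c : Fin (k+1) → ℝ | ∃ j : Fin (k+1), j.1 < i ∧ c = fun r => A r j}}

/-- The truncation (β₀,...,β₂₍ₖ₋₁₎) of (β₀,...,β₂ₖ). -/
def trunc {k : ℕ} (β : Fin (2*k+1) → ℝ) : Fin (2*(k-1)+1) → ℝ :=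
  fun i => β ⟨i.1, by have := i.2; omega⟩

/-! ### Auxiliary machinery for the Hankel rank principle -/

/-- The `i`-th column of a square matrix, as a `ℕ`-indexed family (zero beyond range). -/
noncomputable def colF {n : ℕ} (M : Matrix (Fin n) (Fin n) ℝ) (i : ℕ) : Fin n → ℝ :=
  fun r => if h : i < n then M r ⟨i, h⟩ else 0

lemma range_eq_image_aux {V : Type*} (v : ℕ → V) (r : ℕ) :
    Set.range (fun j : Fin r => v j.1) = v '' Set.Iio r := by
  ext x
  constructor
  · rintro ⟨j, rfl⟩; exact ⟨j.1, j.2, rfl⟩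
  · rintro ⟨i, hi, rfl⟩; exact ⟨⟨i, hi⟩, rfl⟩

lemma indep_aux {V : Type*} [AddCommGroup V] [Module ℝ V] (v : ℕ → V) :
    ∀ r : ℕ, (∀ i, i < r → v i ∉ Submodule.span ℝ (v '' Set.Iio i)) →
      LinearIndependent ℝ (fun j : Fin r => v j.1)
  | 0, _ => linearIndependent_empty_type
  | (r+1), h => by
    have hsn : (fun j : Fin (r+1) => v j.1) = Fin.snoc (fun j : Fin r => v j.1) (v r) := by
      funext j
      induction j using Fin.lastCases with
      | last => simp
      | cast j => simp
    rw [hsn, linearIndependent_fin_snoc]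
    refine ⟨indep_aux v r (fun i hi => h i (by omega)), ?_⟩
    rw [range_eq_image_aux]
    exact h r (by omega)

lemma spanSet_eq_aux {n : ℕ} (M : Matrix (Fin (n+1)) (Fin (n+1)) ℝ) {i : ℕ} (hi : i ≤ n+1) :
    {c : Fin (n+1) → ℝ | ∃ j : Fin (n+1), j.1 < i ∧ c = fun r => M r j}
      = colF M '' Set.Iio i := by
  ext c
  constructor
  · rintro ⟨j, hj, rfl⟩
    refine ⟨j.1, hj, ?_⟩
    funext r
    simp [colF, j.2]
  · rintro ⟨x, hx, rfl⟩
    have hxn : x < n+1 := lt_of_lt_of_le hx hi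
    refine ⟨⟨x, hxn⟩, hx, ?_⟩
    funext r
    simp [colF, hxn]

lemma hankelRank_eq_sInf_aux {n : ℕ} (M : Matrix (Fin (n+1)) (Fin (n+1)) ℝ)
    (hdet : M.det = 0) :
    hankelRank M = sInf {i : ℕ | i < n+1 ∧
      colF M i ∈ Submodule.span ℝ (colF M '' Set.Iio i)} := by
  rw [hankelRank, if_neg (by simpa using hdet)]
  congr 1
  ext i
  constructor
  · rintro ⟨h, hmem⟩
    refine ⟨h, ?_⟩
    rw [spanSet_eq_aux M (le_of_lt h)] at hmem
    have hc : colF M i = fun r => M r ⟨i, h⟩ := by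
      funext r; simp [colF, h]
    rw [hc]
    exact hmem
  · rintro ⟨h, hmem⟩
    refine ⟨h, ?_⟩
    rw [spanSet_eq_aux M (le_of_lt h)]
    have hc : colF M i = fun r => M r ⟨i, h⟩ := by
      funext r; simp [colF, h]
    rw [← hc]
    exact hmem

lemma finrank_span_range_le_aux {s : ℕ} {V : Type*} [AddCommGroup V] [Module ℝ V]
    (v : Fin s → V) : finrank ℝ (Submodule.span ℝ (Set.range v)) ≤ s := by
  have h := finrank_range_le_card (R := ℝ) v
  simpa [Set.finrank] using h

/-- The key propagation step: if the column relation holds on the first `m+1` rows,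
positive semidefiniteness forces it on all rows. -/
lemma key_step {m : ℕ} (A : Matrix (Fin (m+2)) (Fin (m+2)) ℝ) (hpsd : A.PosSemidef)
    {r : ℕ} (a : Fin r → ℝ) {t : ℕ} (hrt : r + t ≤ m)
    (hrow : ∀ i : Fin (m+1),
      (∑ j : Fin r, a j • colF A (j.1 + t)) i.castSucc = colF A (r + t) i.castSucc) :
    ∑ j : Fin r, a j • colF A (j.1 + t) = colF A (r + t) := by
  classical
  set e : ℕ → (Fin (m+2) → ℝ) := fun x i => if i.1 = x then 1 else 0 with he
  have hAe : ∀ x, x < m + 2 → A *ᵥ e x = colF A x := by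
    intro x hx
    have h1 : e x = Pi.single (⟨x, hx⟩ : Fin (m+2)) 1 := by
      funext i
      simp [he, Pi.single_apply, Fin.ext_iff]
    rw [h1, mulVec_single]
    funext i
    simp [colF, hx]
  set u : Fin (m+2) → ℝ := (∑ j : Fin r, a j • e (j.1 + t)) - e (r + t) with hu
  have hAu : A *ᵥ u = (∑ j : Fin r, a j • colF A (j.1 + t)) - colF A (r + t) := by
    have : A *ᵥ u = A.mulVecLin u := rfl
    rw [this, hu, map_sub, map_sum]
    simp only [mulVecLin_apply, mulVec_smul]
    rw [hAe (r+t) (by omega)]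
    congr 1
    refine Finset.sum_congr rfl (fun j _ => ?_)
    rw [hAe (j.1+t) (by have := j.2; omega)]
  have hrowzero : ∀ i : Fin (m+2), i.1 < m+1 → (A *ᵥ u) i = 0 := by
    intro i hi
    rw [hAu]
    have hieq : i = (Fin.castSucc ⟨i.1, hi⟩) := by ext; simp
    simp only [Pi.sub_apply]
    rw [hieq]
    rw [hrow ⟨i.1, hi⟩, sub_self]
  have hulast : ∀ i : Fin (m+2), i.1 = m+1 → u i = 0 := by
    intro i hi
    rw [hu]
    simp only [Pi.sub_apply, Finset.sum_apply, Pi.smul_apply, smul_eq_mul, he]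
    rw [if_neg (by omega), sub_zero]
    apply Finset.sum_eq_zero
    intro j _
    rw [if_neg (by have := j.2; omega), mul_zero]
  have hquad : u ⬝ᵥ (A *ᵥ u) = 0 := by
    apply Finset.sum_eq_zero
    intro i _
    by_cases hi : i.1 < m+1
    · rw [hrowzero i hi, mul_zero]
    · rw [hulast i (by have := i.2; omega), zero_mul]
  have hker : A *ᵥ u = 0 := by
    apply (hpsd.dotProduct_mulVec_zero_iff u).mp
    have hsu : star u = u := by funext i; simp
    rw [hsu]
    exact hquad
  rw [hAu] at hker
  exact sub_eq_zero.mp hker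

/-- The Hankel rank principle, abstract form. -/
theorem hankel_key {m : ℕ} (A : Matrix (Fin (m+2)) (Fin (m+2)) ℝ)
    (B : Matrix (Fin (m+1)) (Fin (m+1)) ℝ)
    (hBA : ∀ i j : Fin (m+1), B i j = A i.castSucc j.castSucc)
    (hH : ∀ i j : Fin (m+1), A i.castSucc j.succ = A i.succ j.castSucc)
    (hpsd : A.PosSemidef) :
    B.rank = hankelRank B ∧ hankelRank B ≤ A.rank ∧ A.rank ≤ hankelRank B + 1 := by
  classical
  -- relation between columns of A and B
  have hABcol : ∀ x, x < m+1 → ∀ i : Fin (m+1), colF A x i.castSucc = colF B x i := by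
    intro x hx i
    have hx2 : x < m+2 := by omega
    simp only [colF, dif_pos hx, dif_pos hx2]
    exact (hBA i ⟨x, hx⟩).symm
  set π : (Fin (m+2) → ℝ) →ₗ[ℝ] (Fin (m+1) → ℝ) :=
    LinearMap.funLeft ℝ ℝ (Fin.castSucc : Fin (m+1) → Fin (m+2)) with hπ
  have hπcol : ∀ x, x < m+1 → π (colF A x) = colF B x := by
    intro x hx
    funext i
    simpa [hπ, LinearMap.funLeft_apply] using hABcol x hx i
  have hBcolsT : ∀ j : Fin (m+1), colF B j.1 = Bᵀ j := by
    intro j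
    funext i
    simp [colF, j.2, transpose_apply]
  have hAcolsT : ∀ x (hx : x < m+2), colF A x = Aᵀ ⟨x, hx⟩ := by
    intro x hx
    funext i
    simp [colF, hx, transpose_apply]
  -- generic lower bound on A.rank via independent B-columns
  have rank_ge : ∀ s : ℕ, s ≤ m+1 →
      LinearIndependent ℝ (fun j : Fin s => colF B j.1) → s ≤ A.rank := by
    intro s hs hind
    have hcomp : π ∘ (fun j : Fin s => colF A j.1) = (fun j : Fin s => colF B j.1) := by
      funext j
      exact hπcol j.1 (by have := j.2; omega)
    have hindA : LinearIndependent ℝ (fun j : Fin s => colF A j.1) := by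
      apply LinearIndependent.of_comp π
      rw [hcomp]
      exact hind
    have h1 : Submodule.span ℝ (Set.range (fun j : Fin s => colF A j.1))
        ≤ Submodule.span ℝ (Set.range Aᵀ) := by
      rw [Submodule.span_le]
      rintro _ ⟨j, rfl⟩
      apply Submodule.subset_span
      exact ⟨⟨j.1, by have := j.2; omega⟩, (hAcolsT j.1 (by have := j.2; omega)).symm⟩
    calc s = finrank ℝ (Submodule.span ℝ (Set.range (fun j : Fin s => colF A j.1))) := by
            rw [finrank_span_eq_card hindA, Fintype.card_fin]
      _ ≤ finrank ℝ (Submodule.span ℝ (Set.range Aᵀ)) := Submodule.finrank_mono h1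
      _ = A.rank := (rank_eq_finrank_span_cols A).symm
  by_cases hdet : B.det ≠ 0
  · -- nonsingular case
    have hrB : hankelRank B = m+1 := by rw [hankelRank, if_pos hdet]
    have hunit : IsUnit B := (isUnit_iff_isUnit_det B).mpr (isUnit_iff_ne_zero.mpr hdet)
    have hBrank : B.rank = m+1 := by
      rw [Matrix.rank_of_isUnit B hunit, Fintype.card_fin]
    have hindB : LinearIndependent ℝ (fun j : Fin (m+1) => colF B j.1) := by
      have := Matrix.linearIndependent_cols_iff_isUnit.mpr hunit
      have heq : (fun j : Fin (m+1) => colF B j.1) = fun j => Bᵀ j :=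
        funext fun j => hBcolsT j
      rw [heq]
      exact this
    refine ⟨by rw [hrB, hBrank], by rw [hrB]; exact rank_ge (m+1) le_rfl hindB, ?_⟩
    rw [hrB]
    calc A.rank ≤ Fintype.card (Fin (m+2)) := A.rank_le_card_width
      _ = m+1+1 := by rw [Fintype.card_fin]
  · -- singular case
    push_neg at hdet
    set S : Set ℕ := {i : ℕ | i < m+1 ∧
      colF B i ∈ Submodule.span ℝ (colF B '' Set.Iio i)} with hS
    have hrS : hankelRank B = sInf S := hankelRank_eq_sInf_aux B hdet
    have hSne : S.Nonempty := by
      rcases Set.eq_empty_or_nonempty S with he | hne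
      · exfalso
        have hind : LinearIndependent ℝ (fun j : Fin (m+1) => colF B j.1) := by
          apply indep_aux
          intro i hi hmem
          have : i ∈ S := ⟨hi, hmem⟩
          rw [he] at this
          exact this
        have heq : (fun j : Fin (m+1) => colF B j.1) = fun j => Bᵀ j :=
          funext fun j => hBcolsT j
        rw [heq] at hind
        exact (((isUnit_iff_isUnit_det B).mp
          (Matrix.linearIndependent_cols_iff_isUnit.mp hind)).ne_zero) hdet
      · exact hne
    set r : ℕ := sInf S with hrdef
    have hrmem : r ∈ S := Nat.sInf_mem hSne
    have hrlt : r < m+1 := hrmem.1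
    have hrm : r ≤ m := by omega
    -- minimality
    have hmin : ∀ i, i < r → colF B i ∉ Submodule.span ℝ (colF B '' Set.Iio i) := by
      intro i hi hmem
      exact Nat.notMem_of_lt_sInf hi ⟨by omega, hmem⟩
    -- coefficients for the dependence of column r
    have hrP : colF B r ∈ Submodule.span ℝ
        (Set.range (fun j : Fin r => colF B j.1)) := by
      rw [range_eq_image_aux]
      exact hrmem.2
    obtain ⟨a, hsum⟩ := (Submodule.mem_span_range_iff_exists_fun ℝ).mp hrP
    -- shift lemma from Hankel structure
    have hshift : ∀ (x) (hx : x < m+1) (i : Fin (m+1)),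
        colF A (x+1) i.castSucc = colF A x i.succ := by
      intro x hx i
      have h1 : x + 1 < m+2 := by omega
      have h2 : x < m+2 := by omega
      simp only [colF, dif_pos h1, dif_pos h2]
      exact hH i ⟨x, hx⟩
    -- the core relation, propagated by PSD + Hankel structure
    have hrel : ∀ t, r + t ≤ m →
        ∑ j : Fin r, a j • colF A (j.1 + t) = colF A (r + t) := by
      intro t
      induction t with
      | zero =>
        intro h0
        apply key_step A hpsd a h0
        intro i
        simp only [Nat.add_zero, Finset.sum_apply, Pi.smul_apply, smul_eq_mul]
        calc ∑ j : Fin r, a j * colF A j.1 i.castSucc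
            = ∑ j : Fin r, a j * colF B j.1 i := by
              refine Finset.sum_congr rfl (fun j _ => ?_)
              rw [hABcol j.1 (by have := j.2; omega) i]
          _ = (∑ j : Fin r, a j • colF B j.1) i := by
              simp [Finset.sum_apply]
          _ = colF B r i := by rw [hsum]
          _ = colF A r i.castSucc := (hABcol r hrlt i).symm
      | succ t ih =>
        intro h1
        have hrelt := ih (by omega)
        apply key_step A hpsd a h1
        intro i
        simp only [← add_assoc, Finset.sum_apply, Pi.smul_apply, smul_eq_mul]
        calc ∑ j : Fin r, a j * colF A (j.1 + t + 1) i.castSucc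
            = ∑ j : Fin r, a j * colF A (j.1 + t) i.succ := by
              refine Finset.sum_congr rfl (fun j _ => ?_)
              rw [hshift (j.1 + t) (by have := j.2; omega) i]
          _ = (∑ j : Fin r, a j • colF A (j.1 + t)) i.succ := by
              simp [Finset.sum_apply]
          _ = colF A (r + t) i.succ := by rw [hrelt]
          _ = colF A (r + t + 1) i.castSucc := (hshift (r + t) (by omega) i).symm
    -- every column of A of index ≤ m lies in the span of the first r columns
    have hspan : ∀ i, i ≤ m →
        colF A i ∈ Submodule.span ℝ (Set.range (fun j : Fin r => colF A j.1)) := by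
      intro i
      induction i using Nat.strong_induction_on with
      | _ i ih =>
        intro him
        by_cases hir : i < r
        · exact Submodule.subset_span ⟨⟨i, hir⟩, rfl⟩
        · push_neg at hir
          have ht : r + (i - r) = i := by omega
          have hrel' := hrel (i - r) (by omega)
          rw [ht] at hrel'
          rw [← hrel']
          apply Submodule.sum_mem
          intro j _
          apply Submodule.smul_mem
          exact ih (j.1 + (i - r)) (by have := j.2; omega) (by have := j.2; omega)
    -- independence of the first r columns of B
    have hindB : LinearIndependent ℝ (fun j : Fin r => colF B j.1) :=
      indep_aux (colF B) r hmin
    -- B.rank = r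
    have hBrank : B.rank = r := by
      apply le_antisymm
      · rw [rank_eq_finrank_span_cols]
        have hcomp : π ∘ (fun j : Fin r => colF A j.1) = (fun j : Fin r => colF B j.1) := by
          funext j
          exact hπcol j.1 (by have := j.2; omega)
        have hsub : Submodule.span ℝ (Set.range Bᵀ)
            ≤ Submodule.span ℝ (Set.range (fun j : Fin r => colF B j.1)) := by
          rw [Submodule.span_le]
          rintro _ ⟨j, rfl⟩
          have h1 : Bᵀ j = π (colF A j.1) := by
            rw [hπcol j.1 j.2, hBcolsT j]
          rw [h1]
          have h2 := hspan j.1 (by have := j.2; omega)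
          have h3 := Submodule.mem_map_of_mem (f := π) h2
          rw [Submodule.map_span, ← Set.range_comp, hcomp] at h3
          exact h3
        calc finrank ℝ (Submodule.span ℝ (Set.range Bᵀ))
            ≤ finrank ℝ (Submodule.span ℝ (Set.range (fun j : Fin r => colF B j.1))) :=
              Submodule.finrank_mono hsub
          _ ≤ r := finrank_span_range_le_aux (fun j : Fin r => colF B j.1)
      · calc r = finrank ℝ (Submodule.span ℝ (Set.range (fun j : Fin r => colF B j.1))) := by
              rw [finrank_span_eq_card hindB, Fintype.card_fin]
          _ ≤ finrank ℝ (Submodule.span ℝ (Set.range Bᵀ)) := by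
              apply Submodule.finrank_mono
              rw [Submodule.span_le]
              rintro _ ⟨j, rfl⟩
              exact Submodule.subset_span ⟨⟨j.1, by have := j.2; omega⟩,
                (hBcolsT ⟨j.1, by have := j.2; omega⟩).symm⟩
          _ = B.rank := (rank_eq_finrank_span_cols B).symm
    refine ⟨by rw [hBrank, hrS], ?_, ?_⟩
    · rw [hrS]
      exact rank_ge r (by omega) hindB
    · -- A.rank ≤ r + 1
      rw [hrS]
      set g : Fin (r+1) → (Fin (m+2) → ℝ) :=
        fun j => if h : j.1 < r then colF A j.1 else colF A (m+1) with hg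
      have hsubA : Set.range Aᵀ ⊆ ↑(Submodule.span ℝ (Set.range g)) := by
        rintro _ ⟨j, rfl⟩
        by_cases hj : j.1 < m+1
        · rw [← hAcolsT j.1 j.2]
          refine Submodule.span_mono ?_ (hspan j.1 (by omega))
          rintro _ ⟨j', rfl⟩
          exact ⟨⟨j'.1, by have := j'.2; omega⟩, by simp [hg, j'.2]⟩
        · have hj1 : j.1 = m+1 := by have := j.2; omega
          have h5 : Aᵀ j = colF A (m+1) := by
            rw [← hj1]
            exact (hAcolsT j.1 j.2).symm
          rw [h5]
          apply Submodule.subset_span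
          exact ⟨⟨r, by omega⟩, by simp [hg]⟩
      calc A.rank = finrank ℝ (Submodule.span ℝ (Set.range Aᵀ)) :=
            rank_eq_finrank_span_cols A
        _ ≤ finrank ℝ (Submodule.span ℝ (Set.range g)) :=
            Submodule.finrank_mono (Submodule.span_le.mpr hsubA)
        _ ≤ r + 1 := finrank_span_range_le_aux g

/-- Hankel rank principle: with r = rank β̃, rank A_β̃ = r and r ≤ rank A_β ≤ r + 1. -/
theorem stmt8 {k : ℕ} (hk : 1 ≤ k) (β : Fin (2*k+1) → ℝ) (hpsd : (hankel β).PosSemidef) :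
    (hankel (trunc β)).rank = hankelRank (hankel (trunc β)) ∧
    hankelRank (hankel (trunc β)) ≤ (hankel β).rank ∧
    (hankel β).rank ≤ hankelRank (hankel (trunc β)) + 1 := by
  obtain ⟨m, rfl⟩ : ∃ m, k = m + 1 := ⟨k - 1, by omega⟩
  apply hankel_key (hankel β) (hankel (trunc β))
  · intro i j
    rfl
  · intro i j
    show β _ = β _
    congr 1
    ext
    simp
    try omega
  · exact hpsd
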